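/- The Toeplitz sequence η is regular: lim_{t→∞} |Per_{p_t}(η) ∩ [0, p_t)| / p_t = 1. -/

import Mathlib

open scoped BigOperators

-- The indicator function of the `\mathscr{B}`-free integers for
--`\mathscr{B} = {2^i b_i : i \ge 1}`. 
open Classical in
noncomputable def eta (b : ℕ → ℕ) : ℤ → ℕ := fun n =>
  if (∀ i : ℕ, 1 ≤ i → ¬ ((2 : ℤ) ^ i * (b i : ℤ) ∣ n)) then 1 else 0

-- `Per x s` is the set of `s`-periodic positions of `x`. 
def Per (x : ℤ → ℕ) (s : ℕ) : Set ℤ := {n : ℤ | ∀ k : ℤ, x (n + k * s) = x n}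

-- `pp b t = 2^t * b_1 * b_2 * \cdots * b_t`. 
def pp (b : ℕ → ℕ) (t : ℕ) : ℕ := 2 ^ t * ∏ i ∈ Finset.Icc 1 t, b i

/-!
Every `n` with `2 ^ t ∤ n` is a `p_t`-periodic position of `η`: the conditions
`2 ^ i b_i ∣ n` with `i ≤ t` are invariant under translation by `p_t`, while those with `i > t`
fail along the whole progression `n + p_t ℤ`, since `2 ^ t` divides `2 ^ i b_i` and `p_t` but
not `n`. The multiples of `2 ^ t` make up the fraction `2 ^ (-t)` of `[0, p_t)`, so the density
of periodic positions lies in `[1 - 2 ^ (-t), 1]`.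
-/

open Finset Filter Topology

namespace Int

theorem card_Ico_zero_mul_filter_dvd {r : ℕ} (hr : 0 < r) (c : ℕ) :
    #{x ∈ Ico (0 : ℤ) (r * c : ℕ) | (r : ℤ) ∣ x} = c := by
  have hr' : (0 : ℚ) < r := by exact_mod_cast hr
  have h := Int.Ico_filter_dvd_card 0 ((r * c : ℕ) : ℤ) (r := r) (by exact_mod_cast hr)
  push_cast at h
  rw [mul_div_cancel_left₀ _ hr'.ne', zero_div, Int.ceil_zero, sub_zero, Int.ceil_natCast,
    max_eq_left (by positivity)] at h
  exact_mod_cast h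

end Int

section Toeplitz

open Classical

variable (b : ℕ → ℕ) {t : ℕ}

theorem two_pow_mul_dvd_pp {i : ℕ} (hi : 1 ≤ i) (hit : i ≤ t) :
    (2 : ℤ) ^ i * (b i : ℤ) ∣ (pp b t : ℤ) := by
  exact_mod_cast mul_dvd_mul (pow_dvd_pow 2 hit) (dvd_prod_of_mem b (mem_Icc.mpr ⟨hi, hit⟩))

theorem two_pow_dvd_pp : (2 : ℤ) ^ t ∣ (pp b t : ℤ) := by
  exact_mod_cast Dvd.intro _ rfl

variable {b}

theorem dvd_add_mul_pp_iff {n : ℤ} (hn : ¬ (2 : ℤ) ^ t ∣ n) (k : ℤ) {i : ℕ} (hi : 1 ≤ i) :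
    (2 : ℤ) ^ i * (b i : ℤ) ∣ n + k * pp b t ↔ (2 : ℤ) ^ i * (b i : ℤ) ∣ n := by
  rcases le_or_gt i t with hit | hti
  · exact dvd_add_left ((two_pow_mul_dvd_pp b hi hit).mul_left k)
  · have h2t : (2 : ℤ) ^ t ∣ (2 : ℤ) ^ i * (b i : ℤ) := (pow_dvd_pow 2 hti.le).mul_right _
    refine iff_of_false (fun h => hn ?_) (fun h => hn (h2t.trans h))
    exact (dvd_add_left ((two_pow_dvd_pp b).mul_left k)).mp (h2t.trans h)

theorem mem_Per_eta_of_not_two_pow_dvd {n : ℤ} (hn : ¬ (2 : ℤ) ^ t ∣ n) :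
    n ∈ Per (eta b) (pp b t) := fun k =>
  if_congr (forall_congr' fun _ => imp_congr_right fun hi =>
    not_congr (dvd_add_mul_pp_iff hn k hi)) rfl rfl

variable (b t)

theorem pp_le_card_Per_eta_add_prod :
    pp b t ≤ #{n ∈ Ico (0 : ℤ) (pp b t) | n ∈ Per (eta b) (pp b t)} + ∏ i ∈ Icc 1 t, b i := by
  have hsplit :=
    card_filter_add_card_filter_not (s := Ico (0 : ℤ) (pp b t)) (p := ((2 : ℤ) ^ t ∣ ·))
  have hdvd : #{n ∈ Ico (0 : ℤ) (pp b t) | (2 : ℤ) ^ t ∣ n} = ∏ i ∈ Icc 1 t, b i := by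
    exact_mod_cast Int.card_Ico_zero_mul_filter_dvd (pow_pos two_pos t) _
  have hPer : #{n ∈ Ico (0 : ℤ) (pp b t) | ¬ (2 : ℤ) ^ t ∣ n} ≤
      #{n ∈ Ico (0 : ℤ) (pp b t) | n ∈ Per (eta b) (pp b t)} :=
    card_le_card (monotone_filter_right _ fun _ _ => mem_Per_eta_of_not_two_pow_dvd)
  rw [Int.card_Ico, sub_zero, Int.toNat_natCast] at hsplit
  omega

theorem card_Per_eta_div_pp_le_one :
    (#{n ∈ Ico (0 : ℤ) (pp b t) | n ∈ Per (eta b) (pp b t)} : ℝ) / pp b t ≤ 1 := by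
  refine div_le_one_of_le₀ ?_ (Nat.cast_nonneg _)
  have h := card_filter_le (Ico (0 : ℤ) (pp b t)) (· ∈ Per (eta b) (pp b t))
  rw [Int.card_Ico, sub_zero, Int.toNat_natCast] at h
  exact_mod_cast h

theorem one_sub_half_pow_le_card_Per_eta_div_pp (hb : ∀ i, 1 ≤ i → 0 < b i) :
    1 - (1 / 2 : ℝ) ^ t ≤
      (#{n ∈ Ico (0 : ℤ) (pp b t) | n ∈ Per (eta b) (pp b t)} : ℝ) / pp b t := by
  set P := ∏ i ∈ Icc 1 t, b i
  have hP : (0 : ℝ) < P := by exact_mod_cast prod_pos fun i hi => hb i (mem_Icc.mp hi).1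
  have hpp : (pp b t : ℝ) = 2 ^ t * P := by simp [pp, P]
  have hle : (pp b t : ℝ) ≤ #{n ∈ Ico (0 : ℤ) (pp b t) | n ∈ Per (eta b) (pp b t)} + P := by
    exact_mod_cast pp_le_card_Per_eta_add_prod b t
  rw [le_div_iff₀ (by rw [hpp]; positivity)]
  calc (1 - (1 / 2 : ℝ) ^ t) * pp b t = pp b t - P := by
        rw [hpp, sub_mul, one_mul, ← mul_assoc, ← mul_pow]; norm_num
    _ ≤ _ := by linarith

end Toeplitz

open Classical in
theorem eta_regular_general (b : ℕ → ℕ)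
    (hgt : ∀ i : ℕ, 1 ≤ i → 1 < b i) :
    Filter.Tendsto
      (fun t : ℕ =>
        (((Finset.Ico (0 : ℤ) (pp b t)).filter
            (fun n => n ∈ Per (eta b) (pp b t))).card : ℝ) / (pp b t : ℝ))
      Filter.atTop (nhds 1) := by
  have hlower : Tendsto (fun t : ℕ => 1 - (1 / 2 : ℝ) ^ t) atTop (𝓝 1) := by
    simpa using (tendsto_pow_atTop_nhds_zero_of_lt_one (by norm_num : (0 : ℝ) ≤ 1 / 2)
      (by norm_num)).const_sub 1
  exact tendsto_of_tendsto_of_tendsto_of_le_of_le hlower tendsto_const_nhds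
    (fun t => one_sub_half_pow_le_card_Per_eta_div_pp b t fun i hi => one_pos.trans (hgt i hi))
    (fun t => card_Per_eta_div_pp_le_one b t)

open Classical in
theorem eta_regular (b : ℕ → ℕ)
    (hodd : ∀ i : ℕ, 1 ≤ i → Odd (b i))
    (hgt : ∀ i : ℕ, 1 ≤ i → 1 < b i)
    (hcop : ∀ i j : ℕ, 1 ≤ i → 1 ≤ j → i ≠ j → Nat.Coprime (b i) (b j)) :
    Filter.Tendsto
      (fun t : ℕ =>
        (((Finset.Ico (0 : ℤ) (pp b t)).filter
            (fun n => n ∈ Per (eta b) (pp b t))).card : ℝ) / (pp b t : ℝ))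
      Filter.atTop (nhds 1) :=
  eta_regular_general b hgt
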